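/- arXiv:1007.3028 — 3 statements merged into one kernel-verified Lean document; each statement's English description precedes it below -/
import Mathlib

section
/- Let A and B be complex symmetric 4×4 matrices, each of rank exactly 2, such that ker A ∩ ker B = {0}. Then for all nonzero complex numbers s and t the matrix sA + tB is invertible (has rank 4). -/
/-!
For symmetric `A` the vector `A x` is orthogonal, for the bilinear dot product, to `ker A`.
If `(s A + t B) x = 0` then `s A x = -t B x` is orthogonal to `ker A` and to `ker B`; rank `2`
in dimension `4` together with `ker A ∩ ker B = 0` forces `ker A ⊕ ker B` to be the whole space,
so `A x = 0`, hence `B x = 0`, hence `x = 0`.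
-/

open Matrix

namespace Matrix

variable {n R K : Type*} [Fintype n]

theorem IsSymm.mulVec_dotProduct_eq_zero_of_mulVec_eq_zero [CommSemiring R]
    {A : Matrix n n R} (hA : A.IsSymm) (x : n → R) {u : n → R} (hu : A *ᵥ u = 0) :
    A *ᵥ x ⬝ᵥ u = 0 := by
  rw [dotProduct_comm, dotProduct_mulVec, ← mulVec_transpose, hA.eq, hu, zero_dotProduct]

theorem rank_add_finrank_ker_mulVecLin [Field K] (A : Matrix n n K) :
    A.rank + Module.finrank K (LinearMap.ker A.mulVecLin) = Fintype.card n := by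
  rw [rank, LinearMap.finrank_range_add_finrank_ker, Module.finrank_fintype_fun_eq_card]

theorem isCompl_ker_mulVecLin_of_rank_add_rank_eq [Field K] {A B : Matrix n n K}
    (hrank : A.rank + B.rank = Fintype.card n)
    (hdisj : Disjoint (LinearMap.ker A.mulVecLin) (LinearMap.ker B.mulVecLin)) :
    IsCompl (LinearMap.ker A.mulVecLin) (LinearMap.ker B.mulVecLin) := by
  refine (Submodule.isCompl_iff_disjoint _ _ ?_).mpr hdisj
  have hA := rank_add_finrank_ker_mulVecLin A
  have hB := rank_add_finrank_ker_mulVecLin B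
  rw [Module.finrank_fintype_fun_eq_card]
  omega

theorem IsSymm.mulVec_eq_zero_of_smul_add_smul_mulVec_eq_zero [Field K]
    {A B : Matrix n n K} (hA : A.IsSymm) (hB : B.IsSymm)
    (hcompl : IsCompl (LinearMap.ker A.mulVecLin) (LinearMap.ker B.mulVecLin))
    {s t : K} (hs : s ≠ 0) {x : n → K} (hx : (s • A + t • B) *ᵥ x = 0) :
    A *ᵥ x = 0 := by
  have hAB : s • A *ᵥ x = -(t • B *ᵥ x) := by
    rw [add_mulVec, smul_mulVec, smul_mulVec] at hx
    exact eq_neg_of_add_eq_zero_left hx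
  refine dotProduct_eq_zero _ fun z => ?_
  obtain ⟨u, hu, w, hw, rfl⟩ :=
    Submodule.mem_sup.mp (hcompl.sup_eq_top ▸ Submodule.mem_top (x := z))
  have hw' : s * (A *ᵥ x ⬝ᵥ w) = 0 := by
    rw [← smul_eq_mul, ← smul_dotProduct, hAB, neg_dotProduct, smul_dotProduct,
      hB.mulVec_dotProduct_eq_zero_of_mulVec_eq_zero x hw, smul_zero, neg_zero]
  rw [dotProduct_add, hA.mulVec_dotProduct_eq_zero_of_mulVec_eq_zero x hu,
    (mul_eq_zero.mp hw').resolve_left hs, add_zero]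

theorem IsSymm.isUnit_smul_add_smul [Field K] [DecidableEq n]
    {A B : Matrix n n K} (hA : A.IsSymm) (hB : B.IsSymm)
    (hcompl : IsCompl (LinearMap.ker A.mulVecLin) (LinearMap.ker B.mulVecLin))
    {s t : K} (hs : s ≠ 0) (ht : t ≠ 0) :
    IsUnit (s • A + t • B) := by
  refine mulVec_injective_iff_isUnit.mp <|
    (injective_iff_map_eq_zero (s • A + t • B).mulVecLin).mpr fun x hx => ?_
  have hAx : A *ᵥ x = 0 := hA.mulVec_eq_zero_of_smul_add_smul_mulVec_eq_zero hB hcompl hs hx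
  have hBx : B *ᵥ x = 0 := by
    have hx' := (add_comm (s • A) (t • B)) ▸ hx
    exact hB.mulVec_eq_zero_of_smul_add_smul_mulVec_eq_zero hA hcompl.symm ht hx'
  exact (Submodule.disjoint_def.mp hcompl.disjoint) x hAx hBx

end Matrix

/-- If `A` and `B` are complex symmetric `4×4` matrices of rank exactly `2` with trivial
common kernel, then `sA + tB` is invertible (of rank `4`) for all nonzero `s, t ∈ ℂ`. -/
theorem smul_add_smul_isUnit_of_rank_two_of_disjoint_ker
    (A B : Matrix (Fin 4) (Fin 4) ℂ) (hA : A.IsSymm) (hB : B.IsSymm)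
    (hrA : A.rank = 2) (hrB : B.rank = 2)
    (hker : ∀ x : Fin 4 → ℂ, A.mulVec x = 0 → B.mulVec x = 0 → x = 0)
    (s t : ℂ) (hs : s ≠ 0) (ht : t ≠ 0) :
    IsUnit (s • A + t • B) ∧ (s • A + t • B).rank = 4 := by
  have hcompl : IsCompl (LinearMap.ker A.mulVecLin) (LinearMap.ker B.mulVecLin) :=
    isCompl_ker_mulVecLin_of_rank_add_rank_eq (by simp [hrA, hrB])
      (Submodule.disjoint_def.mpr hker)
  have hunit := hA.isUnit_smul_add_smul hB hcompl hs ht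
  exact ⟨hunit, by simpa using rank_of_isUnit _ hunit⟩
end

section
/- Let G₁ be the 11×11 integer symmetric Gram matrix of the lattice S̃_det in the basis (a₁,…,a₉,h,w), where a₁,…,a₁₀ are pairwise orthogonal vectors of square −2, h is orthogonal to all aᵢ with h·h = 4, and w = (a₁+⋯+a₁₀+h)/2; explicitly, for 1 ≤ i,j ≤ 9, the entries of G₁ are aᵢ·aⱼ = −2δᵢⱼ, aᵢ·h = 0, aᵢ·w = −1, h·h = 4, h·w = 2, w·w = −4. Let G₂ be the Gram matrix of U ⊕ E8(2) ⊕ [−4]. Then there exists an 11×11 integer matrix P with determinant ±1 such that Pᵀ G₁ P = G₂; that is, S̃_det is isometric to U ⊕ E8(2) ⊕ [−4]. -/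
/-!
Write vectors of `S̃_det` as `∑_{i ≤ 10} xᵢ aᵢ + y h` (all coefficients in `ℤ` or all in `½ + ℤ`),
so that the form is `−2 ∑ xᵢ² + 4 y²`. The vectors `e = a₁ + h + w` and `f = e − a₂` are isotropic
with `e · f = 1`, and `v = 2a₁ + h` has square `−4`. Their orthogonal complement is
`{x₂ = 0, y = x₁, x₃ + ⋯ + x₁₀ = 3 x₁}` with form `2 (x₁² − x₃² − ⋯ − x₁₀²)`: twice the complement
of the characteristic norm-one vector `(3; 1,…,1)` in `I_{1,8}`, the classical model of `E8(−1)`,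
with simple roots `aᵢ − aᵢ₊₁` (`3 ≤ i ≤ 9`) and `h + a₁ + a₃ + a₄ + a₅`. As `U ⊕ [−4] ⊕ E8(2)`
and `S̃_det` have the same discriminant, these vectors form a basis of `S̃_det`.
-/

open Matrix

/-- Adjacency relation of the `E8` Dynkin diagram on vertices `0,…,7`:
a chain `0–1–2–3–4–5–6` with the extra vertex `7` attached to vertex `2`. -/
def e8Adj (a b : ℕ) : Prop :=
  (a, b) ∈ [(0,1),(1,0),(1,2),(2,1),(2,3),(3,2),(3,4),(4,3),
            (4,5),(5,4),(5,6),(6,5),(2,7),(7,2)]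

instance (a b : ℕ) : Decidable (e8Adj a b) := by unfold e8Adj; infer_instance

/-- The Cartan matrix of `E8` (entries indexed by natural numbers `0,…,7`). -/
def cartanE8 (a b : ℕ) : ℤ :=
  if a = b then 2 else if e8Adj a b then -1 else 0

/-- The bilinear form associated with an integral Gram matrix `G`. -/
def BG {k : ℕ} (G : Matrix (Fin k) (Fin k) ℤ) (x y : Fin k → ℤ) : ℤ :=
  x ⬝ᵥ G.mulVec y

/-- The Gram matrix `G₁` of the lattice `S̃_det` in the basis `(a₁,…,a₉,h,w)`, where the
`aᵢ` are pairwise orthogonal of square `−2`, `h ⊥ aᵢ`, `h·h = 4`, and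
`w = (a₁+⋯+a₁₀+h)/2`. Indices `0,…,8` correspond to `a₁,…,a₉`, index `9` to `h`,
index `10` to `w`. -/
def G1 : Matrix (Fin 11) (Fin 11) ℤ := Matrix.of fun i j =>
  if i.val < 9 then
    (if j.val < 9 then (if i = j then -2 else 0) else if j.val = 9 then 0 else -1)
  else if i.val = 9 then
    (if j.val < 9 then 0 else if j.val = 9 then 4 else 2)
  else
    (if j.val < 9 then -1 else if j.val = 9 then 2 else -4)

/-- The Gram matrix `G₂` of `U ⊕ E8(2) ⊕ [−4]`: indices `0,1` span a hyperbolic plane `U`,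
indices `2,…,9` carry the Gram matrix `−2C` of `E8(2)`, and index `10` has square `−4`. -/
def G2 : Matrix (Fin 11) (Fin 11) ℤ := Matrix.of fun i j =>
  if i.val < 2 then
    (if j.val < 2 then (if i = j then 0 else 1) else 0)
  else if i.val < 10 then
    (if 2 ≤ j.val ∧ j.val < 10 then -2 * cartanE8 (i.val - 2) (j.val - 2) else 0)
  else
    (if j.val = 10 then -4 else 0)

theorem Matrix.det_eq_one_or_eq_neg_one_of_mul_eq_one {n : Type*} [Fintype n] [DecidableEq n]
    {A B : Matrix n n ℤ} (h : A * B = 1) : A.det = 1 ∨ A.det = -1 :=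
  Int.isUnit_iff.mp (isUnit_det_of_right_inverse h)

/-- Column `j` (row `j` of the transposed literal) is the `j`-th basis vector of `U ⊕ E8(2) ⊕ [−4]`
in the coordinates `(a₁,…,a₉,h,w)`: `e`, `f`, `a₃ − a₄`, …, `a₈ − a₉`,
`a₉ − a₁₀ = a₁ + ⋯ + a₈ + 2a₉ + h − 2w`, `−(h + a₁ + a₃ + a₄ + a₅)`, `v`. -/
def uE8TwoBasis : Matrix (Fin 11) (Fin 11) ℤ :=
  !![ 1,  0,  0,  0,  0,  0,  0,  0,  0,  1,  1;
      1, -1,  0,  0,  0,  0,  0,  0,  0,  1,  1;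
      0,  0,  1, -1,  0,  0,  0,  0,  0,  0,  0;
      0,  0,  0,  1, -1,  0,  0,  0,  0,  0,  0;
      0,  0,  0,  0,  1, -1,  0,  0,  0,  0,  0;
      0,  0,  0,  0,  0,  1, -1,  0,  0,  0,  0;
      0,  0,  0,  0,  0,  0,  1, -1,  0,  0,  0;
      0,  0,  0,  0,  0,  0,  0,  1, -1,  0,  0;
      1,  1,  1,  1,  1,  1,  1,  1,  2,  1, -2;
     -1,  0, -1, -1, -1,  0,  0,  0,  0, -1,  0;
      2,  0,  0,  0,  0,  0,  0,  0,  0,  1,  0]ᵀ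

def uE8TwoBasisInv : Matrix (Fin 11) (Fin 11) ℤ :=
  !![ -3,  -3,  -5, -10, -15, -12,  -9,  -6,  -3,  -8,  1;
       1,  -1,   0,   0,   0,   0,   0,   0,   0,   0,  0;
      -1,  -1,  -1,  -3,  -5,  -4,  -3,  -2,  -1,  -3,  0;
      -1,  -1,  -2,  -3,  -5,  -4,  -3,  -2,  -1,  -3,  0;
      -1,  -1,  -2,  -4,  -5,  -4,  -3,  -2,  -1,  -3,  0;
      -1,  -1,  -2,  -4,  -6,  -4,  -3,  -2,  -1,  -3,  0;
      -1,  -1,  -2,  -4,  -6,  -5,  -3,  -2,  -1,  -3,  0;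
      -1,  -1,  -2,  -4,  -6,  -5,  -4,  -2,  -1,  -3,  0;
      -1,  -1,  -2,  -4,  -6,  -5,  -4,  -3,  -1,  -3,  0;
       6,   6,  10,  20,  30,  24,  18,  12,   6,  16, -1;
      -2,  -3,  -5, -10, -15, -12,  -9,  -6,  -3,  -8,  0]ᵀ

theorem uE8TwoBasis_mul_inv : uE8TwoBasis * uE8TwoBasisInv = 1 := by decide

theorem uE8TwoBasis_transpose_mul_G1_mul : uE8TwoBasisᵀ * G1 * uE8TwoBasis = G2 := by decide

/-- The lattice `S̃_det` is isometric to `U ⊕ E8(2) ⊕ [−4]`: the Gram matrices `G₁` and `G₂`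
are related by an integral base change of determinant `±1`. -/
theorem Sdet_isometric_U_E8two_minus4 :
    ∃ P : Matrix (Fin 11) (Fin 11) ℤ,
      (P.det = 1 ∨ P.det = -1) ∧ Pᵀ * G1 * P = G2 :=
  ⟨uE8TwoBasis, det_eq_one_or_eq_neg_one_of_mul_eq_one uE8TwoBasis_mul_inv,
    uE8TwoBasis_transpose_mul_G1_mul⟩
end

section
/- In the lattice M = E8(2) ⊕ 2A1(−1) with the vector h = e₉ + e₁₀, there do not exist five vectors t₁,…,t₅ ∈ ℤ^10 such that B(tᵢ,tᵢ) = −4 for each i, B(tᵢ,tⱼ) = 0 for all i ≠ j, and t₁+⋯+t₅ − h ∈ 2ℤ^10. -/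
open Matrix

/-- The Gram matrix of `M = E8(2) ⊕ 2A1(−1)`: indices `0,…,7` carry `−2C` (the lattice
`E8(2)`) and indices `8, 9` each have square `2`. -/
def GM : Matrix (Fin 10) (Fin 10) ℤ := Matrix.of fun i j =>
  if i.val < 8 ∧ j.val < 8 then -2 * cartanE8 i.val j.val
  else if i = j then 2 else 0

/-- The vector `h = e₉ + e₁₀` of square `4`. -/
def hvec : Fin 10 → ℤ := Pi.single 8 1 + Pi.single 9 1

/-! If `t₁ + ⋯ + t₅ = h + 2a`, orthogonality gives `B(h + 2a, h + 2a) = 5 · (-4) = -20`.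
On the other hand `B(h + 2a, h + 2a) = B(h, h) + 4 (B(a, a) + B(h, a))`, with `B(h, h) = 4`, and
`B(a, a) + B(h, a) ≡ 0 mod 4`: the `E8(2)` part of `B(a, a)` lies in `4ℤ` because `E8` is even,
and the `2A1(−1)` part contributes `2x² + 2x = 2x(x + 1) ∈ 4ℤ` in each coordinate.
So `B(h + 2a, h + 2a) ≡ 4 mod 16`, while `-20 ≡ 12 mod 16`. -/

section Bilinear

variable {k : ℕ} (G : Matrix (Fin k) (Fin k) ℤ)

lemma BG_sum_left {ι : Type*} (s : Finset ι) (x : ι → Fin k → ℤ) (y : Fin k → ℤ) :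
    BG G (∑ i ∈ s, x i) y = ∑ i ∈ s, BG G (x i) y :=
  sum_dotProduct s x _

lemma BG_sum_right {ι : Type*} (s : Finset ι) (x : Fin k → ℤ) (y : ι → Fin k → ℤ) :
    BG G x (∑ j ∈ s, y j) = ∑ j ∈ s, BG G x (y j) := by
  rw [BG, mulVec_sum, dotProduct_sum]
  rfl

lemma BG_sum_self_of_pairwise_orthogonal {ι : Type*} [Fintype ι] (x : ι → Fin k → ℤ)
    (horth : ∀ i j, i ≠ j → BG G (x i) (x j) = 0) :
    BG G (∑ i, x i) (∑ i, x i) = ∑ i, BG G (x i) (x i) := by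
  rw [BG_sum_left]
  refine Finset.sum_congr rfl fun i _ => ?_
  rw [BG_sum_right, Finset.sum_eq_single i (fun j _ hj => horth i j hj.symm) (by simp)]

variable {G}

lemma BG_comm (hG : G.IsSymm) (x y : Fin k → ℤ) : BG G x y = BG G y x := by
  rw [BG, BG, dotProduct_mulVec, dotProduct_comm, ← mulVec_transpose, hG.eq]

lemma BG_add_smul_self (hG : G.IsSymm) (x a : Fin k → ℤ) (n : ℕ) :
    BG G (x + n • a) (x + n • a) = BG G x x + 2 * n * BG G x a + n ^ 2 * BG G a a := by
  have hax := BG_comm hG a x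
  simp only [BG] at hax ⊢
  simp only [add_dotProduct, dotProduct_add, mulVec_add, mulVec_smul, smul_dotProduct,
    dotProduct_smul, hax]
  simp only [nsmul_eq_mul]
  ring

end Bilinear

lemma GM_isSymm : GM.IsSymm := by decide

lemma BG_GM_hvec_self : BG GM hvec hvec = 4 := by decide

lemma BG_GM_hvec_left (a : Fin 10 → ℤ) : BG GM hvec a = 2 * a 8 + 2 * a 9 := by
  simp [BG, GM, hvec, dotProduct, mulVec, Fin.sum_univ_succ, Pi.single_apply]

lemma BG_GM_self (a : Fin 10 → ℤ) :
    BG GM a a = -4 * (a 0 ^ 2 + a 1 ^ 2 + a 2 ^ 2 + a 3 ^ 2 + a 4 ^ 2 + a 5 ^ 2 + a 6 ^ 2 + a 7 ^ 2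
        - (a 0 * a 1 + a 1 * a 2 + a 2 * a 3 + a 3 * a 4 + a 4 * a 5 + a 5 * a 6 + a 2 * a 7))
      + 2 * a 8 ^ 2 + 2 * a 9 ^ 2 := by
  simp [BG, GM, cartanE8, e8Adj, dotProduct, mulVec, Fin.sum_univ_succ]
  ring

lemma four_dvd_BG_GM_self_add_hvec (a : Fin 10 → ℤ) : 4 ∣ BG GM a a + BG GM hvec a := by
  have h8 := mul_dvd_mul_left 2 (Int.even_mul_succ_self (a 8)).two_dvd
  have h9 := mul_dvd_mul_left 2 (Int.even_mul_succ_self (a 9)).two_dvd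
  rw [BG_GM_self, BG_GM_hvec_left]
  ring_nf at h8 h9 ⊢
  omega

/-- In the lattice `M = E8(2) ⊕ 2A1(−1)` there is no quintuple of pairwise orthogonal
vectors of square `−4` whose sum is congruent to `h = e₉ + e₁₀` modulo `2M`. -/
theorem no_orthogonal_quintuple :
    ¬ ∃ t : Fin 5 → (Fin 10 → ℤ),
        (∀ i, BG GM (t i) (t i) = -4) ∧
        (∀ i j, i ≠ j → BG GM (t i) (t j) = 0) ∧
        (∃ a : Fin 10 → ℤ, (∑ i, t i) - hvec = 2 • a) := by
  rintro ⟨t, hnorm, horth, a, hsum⟩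
  have hsum_norm : BG GM (∑ i, t i) (∑ i, t i) = -20 := by
    simp [BG_sum_self_of_pairwise_orthogonal GM t horth, hnorm]
  rw [sub_eq_iff_eq_add'.mp hsum, BG_add_smul_self GM_isSymm, BG_GM_hvec_self] at hsum_norm
  obtain ⟨k, hk⟩ := four_dvd_BG_GM_self_add_hvec a
  push_cast at hsum_norm
  omega
end
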